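/- Let L be an affine subspace of ℝ^n and let Q = [0,1]^n ∩ L be nonempty with all extreme points in {0,1}^n. Let c ∈ ℝ^n and γ ∈ ℝ with cᵀx ≤ γ for all x ∈ Q, and suppose the exposed face F = {x ∈ Q : cᵀx = γ} is nonempty. Then there exists an affine subspace L′ of ℝ^n such that F = [0,1]^n ∩ L′, and every extreme point of F lies in {0,1}^n. (This is the fact, used repeatedly in the paper, that every face of a compressed polytope is compressed, expressed via the paper's characterization (3) of compressed polytopes.) -/

import Mathlib

noncomputable section

/-- The dot product `cᵀx = ∑ i, c i * x i` on `ℝ^n`. -/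
def dot {n : ℕ} (c x : Fin n → ℝ) : ℝ := ∑ i, c i * x i

/-- The unit hypercube `[0,1]^n ⊆ ℝ^n`. -/
def stdCube (n : ℕ) : Set (Fin n → ℝ) := {x | ∀ i, x i ∈ Set.Icc (0 : ℝ) 1}

/-- The set of `0/1` points `{0,1}^n ⊆ ℝ^n`. -/
def zeroOneSet (n : ℕ) : Set (Fin n → ℝ) := {x | ∀ i, x i = 0 ∨ x i = 1}

lemma dot_add {n : ℕ} (c x y : Fin n → ℝ) : dot c (x + y) = dot c x + dot c y := by
  simp [dot, mul_add, Finset.sum_add_distrib]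

lemma dot_smul {n : ℕ} (c : Fin n → ℝ) (a : ℝ) (x : Fin n → ℝ) :
    dot c (a • x) = a * dot c x := by
  simp [dot, Finset.mul_sum, mul_left_comm]

lemma dot_sub {n : ℕ} (c x y : Fin n → ℝ) : dot c (x - y) = dot c x - dot c y := by
  simp [dot, mul_sub, Finset.sum_sub_distrib]

/-- Every exposed face of a compressed polytope is compressed, in the cube-section form:
if `Q = [0,1]^n ∩ L` is nonempty with all extreme points in `{0,1}^n`, and
`F = {x ∈ Q : cᵀx = γ}` is a nonempty exposed face of `Q` (where `cᵀx ≤ γ` on `Q`), then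
`F = [0,1]^n ∩ L′` for some affine subspace `L′`, and all extreme points of `F` lie in
`{0,1}^n`. -/
theorem face_of_cube_section
    (n : ℕ) (L : AffineSubspace ℝ (Fin n → ℝ))
    (Q : Set (Fin n → ℝ)) (hQ : Q = stdCube n ∩ (L : Set (Fin n → ℝ)))
    (hne : Q.Nonempty)
    (hint : Q.extremePoints ℝ ⊆ zeroOneSet n)
    (c : Fin n → ℝ) (γ : ℝ)
    (hvalid : ∀ x ∈ Q, dot c x ≤ γ)
    (F : Set (Fin n → ℝ)) (hF : F = {x ∈ Q | dot c x = γ}) (hFne : F.Nonempty) :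
    ∃ L' : AffineSubspace ℝ (Fin n → ℝ),
      F = stdCube n ∩ (L' : Set (Fin n → ℝ)) ∧ F.extremePoints ℝ ⊆ zeroOneSet n := by
  -- the hyperplane {x | dot c x = γ} as an affine subspace
  set H : AffineSubspace ℝ (Fin n → ℝ) :=
    { carrier := {x | dot c x = γ}
      smul_vsub_vadd_mem' := by
        intro a x y z hx hy hz
        simp only [Set.mem_setOf_eq] at *
        have : dot c (a • (x -ᵥ y) +ᵥ z) = a * (dot c x - dot c y) + dot c z := by
          simp only [vsub_eq_sub, vadd_eq_add, dot_add, dot_smul, dot_sub]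
        rw [this, hx, hy, hz]; ring } with hH
  refine ⟨L ⊓ H, ?_, ?_⟩
  · ext x
    have hmem : ∀ y, y ∈ (L ⊓ H : AffineSubspace ℝ (Fin n → ℝ)) ↔ y ∈ L ∧ y ∈ H :=
      fun y => Iff.rfl
    simp only [hF, hQ, Set.mem_inter_iff, Set.mem_setOf_eq, SetLike.mem_coe, hmem]
    constructor
    · rintro ⟨⟨h1, h2⟩, h3⟩; exact ⟨h1, h2, h3⟩
    · rintro ⟨h1, h2, h3⟩; exact ⟨⟨h1, h2⟩, h3⟩
  · -- F is an extreme subset of Q, so its extreme points are extreme points of Q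
    have hext : IsExtreme ℝ Q F := by
      constructor
      · rw [hF]; exact Set.sep_subset _ _
      · rintro x hx y hy z hzF hz
        rw [hF] at hzF
        obtain ⟨hzQ, hzγ⟩ := hzF
        obtain ⟨a, b, ha, hb, hab, habz⟩ := hz
        have hdz : a * dot c x + b * dot c y = γ := by
          rw [← hzγ, ← habz, dot_add, dot_smul, dot_smul]
        have hx' : dot c x = γ := by
          by_contra hne'
          have h1 : dot c x < γ := lt_of_le_of_ne (hvalid x hx) hne'
          have h2 : dot c y ≤ γ := hvalid y hy
          have : a * dot c x + b * dot c y < a * γ + b * γ := by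
            have := mul_lt_mul_of_pos_left h1 ha
            have := mul_le_mul_of_nonneg_left h2 hb.le
            linarith
          rw [hdz] at this
          have hg : a * γ + b * γ = γ := by rw [← add_mul, hab, one_mul]
          linarith
        have hy' : dot c y = γ := by
          by_contra hne'
          have h2 : dot c y < γ := lt_of_le_of_ne (hvalid y hy) hne'
          have := mul_lt_mul_of_pos_left h2 hb
          have hg : a * γ + b * γ = γ := by rw [← add_mul, hab, one_mul]
          rw [hx'] at hdz
          linarith
        exact hF ▸ ⟨hx, hx'⟩
    exact fun x hx => hint (hext.extremePoints_subset_extremePoints hx)
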